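/- Dual Choquet integral maximum representation: if m is a supermodular capacity on a nonempty finite set Ω with dual m'(A) = 1 − m(Ω \ A), then for every f : Ω → ℝ the discrete Choquet integral with respect to the dual satisfies (C)∫ f dm' = max_{P ∈ core(m)} E_P[f], i.e., there exists P* ∈ core(m) with E_{P*}[f] = (C)∫ f dm' and E_P[f] ≤ (C)∫ f dm' for every P ∈ core(m). -/

import Mathlib

open Finset Filter

/-- A capacity on a finite type `Ω`: a normalized monotone set function. -/
def IsCapacity {Ω : Type*} [Fintype Ω] (m : Finset Ω → ℝ) : Prop :=
  m ∅ = 0 ∧ m Finset.univ = 1 ∧ ∀ ⦃A B : Finset Ω⦄, A ⊆ B → m A ≤ m B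

/-- The initial segment `{σ 0, …, σ (k-1)}` of an enumeration `σ` of `Ω`. -/
def prefSet {Ω : Type*} [Fintype Ω] [DecidableEq Ω]
    (σ : Fin (Fintype.card Ω) ≃ Ω) (k : ℕ) : Finset Ω :=
  (Finset.univ.filter fun j : Fin (Fintype.card Ω) => (j : ℕ) < k).image σ

/-- The Choquet sum of `f` against `m` along an enumeration `σ` of `Ω`. -/
def choquetSum {Ω : Type*} [Fintype Ω] [DecidableEq Ω]
    (m : Finset Ω → ℝ) (f : Ω → ℝ) (σ : Fin (Fintype.card Ω) ≃ Ω) : ℝ :=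
  ∑ i : Fin (Fintype.card Ω),
    f (σ i) * (m (prefSet σ ((i : ℕ) + 1)) - m (prefSet σ (i : ℕ)))

/-- An enumeration of `Ω` along which `f` is weakly decreasing. -/
noncomputable def sortedEquiv {Ω : Type*} [Fintype Ω] (f : Ω → ℝ) :
    Fin (Fintype.card Ω) ≃ Ω :=
  (Tuple.sort fun i => -f ((Fintype.equivFin Ω).symm i)).trans
    (Fintype.equivFin Ω).symm

/-- The discrete Choquet integral of `f` with respect to `m`. -/
noncomputable def choquet {Ω : Type*} [Fintype Ω] [DecidableEq Ω]
    (m : Finset Ω → ℝ) (f : Ω → ℝ) : ℝ :=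
  choquetSum m f (sortedEquiv f)

/-- The dual capacity `m'(A) = 1 - m(Ω \ A)`. -/
def dualCap {Ω : Type*} [Fintype Ω] [DecidableEq Ω]
    (m : Finset Ω → ℝ) (A : Finset Ω) : ℝ :=
  1 - m Aᶜ

/-- Supermodularity: `m(A ∪ B) + m(A ∩ B) ≥ m(A) + m(B)`. -/
def IsSupermodular {Ω : Type*} [DecidableEq Ω] (m : Finset Ω → ℝ) : Prop :=
  ∀ A B : Finset Ω, m A + m B ≤ m (A ∪ B) + m (A ∩ B)

/-- Submodularity: `m(A ∪ B) + m(A ∩ B) ≤ m(A) + m(B)`. -/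
def IsSubmodular {Ω : Type*} [DecidableEq Ω] (m : Finset Ω → ℝ) : Prop :=
  ∀ A B : Finset Ω, m (A ∪ B) + m (A ∩ B) ≤ m A + m B

/-- A probability vector on a finite type `Ω`. -/
def IsProbVector {Ω : Type*} [Fintype Ω] (P : Ω → ℝ) : Prop :=
  (∀ ω, 0 ≤ P ω) ∧ ∑ ω, P ω = 1

/-- Membership in the core of a capacity `m`. -/
def memCore {Ω : Type*} [Fintype Ω] (m : Finset Ω → ℝ) (P : Ω → ℝ) : Prop :=
  IsProbVector P ∧ ∀ A : Finset Ω, m A ≤ ∑ ω ∈ A, P ω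

/-- The λ-rule set function `m_λ(A) = (∏_{ω ∈ A} (1 + λ g(ω)) - 1) / λ`. -/
noncomputable def mLam {Ω : Type*} (lam : ℝ) (g : Ω → ℝ) (A : Finset Ω) : ℝ :=
  ((∏ ω ∈ A, (1 + lam * g ω)) - 1) / lam
/-!
Dualizing turns the supermodular `m` into a submodular capacity `m'`, and a probability vector
lies in `core(m)` exactly when it is dominated by `m'` on every set. Sort `Ω` so that `f`
decreases and let `P` be the marginal vector of `m'` along this order,
`P(σ i) = m'(S_{i+1}) - m'(S_i)` with `S_k = {σ 0, …, σ (k-1)}`. By construction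
`E_P[f]` is the Choquet sum, and submodularity makes `P` dominated by `m'` (the greedy
algorithm), so `P ∈ core(m)`. Any other `Q ∈ core(m)` satisfies `Q(S_k) ≤ m'(S_k) = P(S_k)` with
equality at `k = n`, and Abel summation against the decreasing values of `f` gives
`E_Q[f] ≤ E_P[f]`.
-/

lemma sum_range_mul_nonneg_of_antitone {g d : ℕ → ℝ} {n : ℕ}
    (hg : ∀ i, i + 1 < n → g (i + 1) ≤ g i) (hd : ∀ k ≤ n, 0 ≤ ∑ i ∈ range k, d i)
    (hdn : ∑ i ∈ range n, d i = 0) : 0 ≤ ∑ i ∈ range n, g i * d i := by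
  have abel := sum_range_by_parts g d n
  simp only [smul_eq_mul, hdn, mul_zero, zero_sub] at abel
  rw [abel, neg_nonneg]
  refine sum_nonpos fun i hi => mul_nonpos_of_nonpos_of_nonneg ?_ (hd _ (by grind))
  have := hg i (by grind)
  linarith

lemma IsCapacity.dualCap {Ω : Type*} [Fintype Ω] [DecidableEq Ω] {m : Finset Ω → ℝ}
    (hm : IsCapacity m) : IsCapacity (dualCap m) := by
  obtain ⟨h0, h1, hmono⟩ := hm
  refine ⟨by simp [_root_.dualCap, h1], by simp [_root_.dualCap, h0], fun A B hAB => ?_⟩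
  have := hmono (compl_subset_compl.mpr hAB)
  simp only [_root_.dualCap]
  linarith

lemma IsSupermodular.isSubmodular_dualCap {Ω : Type*} [Fintype Ω] [DecidableEq Ω]
    {m : Finset Ω → ℝ} (hm : IsSupermodular m) : IsSubmodular (dualCap m) := by
  intro A B
  have := hm Aᶜ Bᶜ
  simp only [_root_.dualCap, compl_union, compl_inter]
  linarith

lemma memCore_iff_sum_le_dualCap {Ω : Type*} [Fintype Ω] [DecidableEq Ω]
    {m : Finset Ω → ℝ} {Q : Ω → ℝ} :
    memCore m Q ↔ IsProbVector Q ∧ ∀ A, ∑ ω ∈ A, Q ω ≤ dualCap m A := by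
  refine and_congr_right fun hQ => ?_
  have split (A : Finset Ω) : ∑ ω ∈ A, Q ω + ∑ ω ∈ Aᶜ, Q ω = 1 := by
    rw [sum_add_sum_compl, hQ.2]
  constructor
  · intro h A
    rw [dualCap]
    linarith [h Aᶜ, split A]
  · intro h A
    have hA := h Aᶜ
    rw [dualCap, compl_compl] at hA
    linarith [split A]

section PrefSet

variable {Ω : Type*} [Fintype Ω] [DecidableEq Ω] (σ : Fin (Fintype.card Ω) ≃ Ω)

@[simp]
lemma prefSet_zero : prefSet σ 0 = ∅ := by simp [prefSet]

@[simp]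
lemma prefSet_card : prefSet σ (Fintype.card Ω) = univ := by
  rw [prefSet, filter_true_of_mem fun j _ => j.isLt]
  exact image_univ_equiv σ

lemma prefSet_succ {k : ℕ} (hk : k < Fintype.card Ω) :
    prefSet σ (k + 1) = insert (σ ⟨k, hk⟩) (prefSet σ k) := by
  unfold prefSet
  rw [← image_insert]
  congr 1
  ext j
  simp only [mem_filter, mem_insert, mem_univ, true_and, Fin.ext_iff]
  omega

lemma apply_notMem_prefSet {k : ℕ} (hk : k < Fintype.card Ω) : σ ⟨k, hk⟩ ∉ prefSet σ k := by
  simp [prefSet]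

lemma prefSet_mono {k l : ℕ} (h : k ≤ l) : prefSet σ k ⊆ prefSet σ l :=
  image_subset_image (monotone_filter_right _ fun _ _ hj => lt_of_lt_of_le hj h)

end PrefSet

/-- `v ∘ σ` as a sequence, padded with zeros, so that Abel summation over `range` applies. -/
noncomputable def seqAlong {Ω : Type*} [Fintype Ω] (σ : Fin (Fintype.card Ω) ≃ Ω) (v : Ω → ℝ)
    (i : ℕ) : ℝ :=
  if h : i < Fintype.card Ω then v (σ ⟨i, h⟩) else 0

lemma seqAlong_mul {Ω : Type*} [Fintype Ω] (σ : Fin (Fintype.card Ω) ≃ Ω) (v w : Ω → ℝ)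
    (i : ℕ) : seqAlong σ (v * w) i = seqAlong σ v i * seqAlong σ w i := by
  unfold seqAlong
  split_ifs <;> simp

section Enumeration

variable {Ω : Type*} [Fintype Ω] [DecidableEq Ω] (σ : Fin (Fintype.card Ω) ≃ Ω)

lemma sum_prefSet_eq_sum_range (v : Ω → ℝ) {k : ℕ} (hk : k ≤ Fintype.card Ω) :
    ∑ ω ∈ prefSet σ k, v ω = ∑ i ∈ range k, seqAlong σ v i := by
  induction k with
  | zero => simp
  | succ k ih =>
    have hk' : k < Fintype.card Ω := hk
    rw [prefSet_succ σ hk', sum_insert (apply_notMem_prefSet σ hk'), sum_range_succ, ih hk'.le,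
      seqAlong, dif_pos hk', add_comm]

lemma sum_eq_sum_range_seqAlong (v : Ω → ℝ) :
    ∑ ω, v ω = ∑ i ∈ range (Fintype.card Ω), seqAlong σ v i := by
  rw [← sum_prefSet_eq_sum_range σ v le_rfl, prefSet_card]

lemma sum_mul_le_sum_mul_of_sum_prefSet_le {f P Q : Ω → ℝ} (hf : Antitone (f ∘ σ))
    (hQP : ∀ k ≤ Fintype.card Ω, ∑ ω ∈ prefSet σ k, Q ω ≤ ∑ ω ∈ prefSet σ k, P ω)
    (htotal : ∑ ω, Q ω = ∑ ω, P ω) : ∑ ω, Q ω * f ω ≤ ∑ ω, P ω * f ω := by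
  have hdiff : ∑ ω, (f * (P - Q)) ω = ∑ ω, P ω * f ω - ∑ ω, Q ω * f ω := by
    rw [← sum_sub_distrib]
    exact sum_congr rfl fun ω _ => by simp only [Pi.mul_apply, Pi.sub_apply]; ring
  suffices 0 ≤ ∑ ω, (f * (P - Q)) ω by linarith
  rw [sum_eq_sum_range_seqAlong σ]
  simp only [seqAlong_mul]
  refine sum_range_mul_nonneg_of_antitone (fun i hi => ?_) (fun k hk => ?_) ?_
  · simp only [seqAlong, dif_pos hi, dif_pos (Nat.lt_of_succ_lt hi)]
    exact hf (Fin.mk_le_mk.mpr i.le_succ)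
  · rw [← sum_prefSet_eq_sum_range σ _ hk, Pi.sub_def, sum_sub_distrib, sub_nonneg]
    exact hQP k hk
  · rw [← sum_eq_sum_range_seqAlong, Pi.sub_def, sum_sub_distrib, htotal, sub_self]

end Enumeration

lemma antitone_comp_sortedEquiv {Ω : Type*} [Fintype Ω] (f : Ω → ℝ) :
    Antitone (f ∘ sortedEquiv f) := by
  intro i j hij
  simpa [sortedEquiv] using Tuple.monotone_sort (fun i => -f ((Fintype.equivFin Ω).symm i)) hij

section MarginalVector

variable {Ω : Type*} [Fintype Ω] [DecidableEq Ω] (μ : Finset Ω → ℝ)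
  (σ : Fin (Fintype.card Ω) ≃ Ω)

def marginalVector (ω : Ω) : ℝ :=
  μ (prefSet σ ((σ.symm ω : ℕ) + 1)) - μ (prefSet σ (σ.symm ω))

@[simp]
lemma marginalVector_apply (i : Fin (Fintype.card Ω)) :
    marginalVector μ σ (σ i) = μ (prefSet σ ((i : ℕ) + 1)) - μ (prefSet σ i) := by
  simp [marginalVector]

lemma sum_marginalVector_mul (f : Ω → ℝ) :
    ∑ ω, marginalVector μ σ ω * f ω = choquetSum μ f σ := by
  rw [choquetSum, ← Equiv.sum_comp σ]
  simp only [marginalVector_apply, mul_comm]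

lemma sum_prefSet_marginalVector {k : ℕ} (hk : k ≤ Fintype.card Ω) :
    ∑ ω ∈ prefSet σ k, marginalVector μ σ ω = μ (prefSet σ k) - μ ∅ := by
  induction k with
  | zero => simp
  | succ k ih =>
    rw [prefSet_succ σ hk, sum_insert (apply_notMem_prefSet σ hk), ih (by omega),
      marginalVector_apply, ← prefSet_succ σ hk]
    ring

lemma sum_marginalVector : ∑ ω, marginalVector μ σ ω = μ univ - μ ∅ := by
  rw [← prefSet_card σ, sum_prefSet_marginalVector μ σ le_rfl, prefSet_card]

lemma marginalVector_nonneg (hμ : Monotone μ) (ω : Ω) : 0 ≤ marginalVector μ σ ω :=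
  sub_nonneg.mpr (hμ (prefSet_mono σ (Nat.le_succ _)))

/-- Greedy step: adding `σ k` to `S_k ∩ B` gains at least as much as adding it to `S_k`. -/
lemma sum_prefSet_inter_marginalVector_le (hμ : IsSubmodular μ) (B : Finset Ω) {k : ℕ}
    (hk : k ≤ Fintype.card Ω) :
    ∑ ω ∈ prefSet σ k ∩ B, marginalVector μ σ ω ≤ μ (prefSet σ k ∩ B) - μ ∅ := by
  induction k with
  | zero => simp
  | succ k ih =>
    have hk' : k < Fintype.card Ω := hk
    by_cases hB : σ ⟨k, hk'⟩ ∈ B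
    · have hnotMem : σ ⟨k, hk'⟩ ∉ prefSet σ k ∩ B :=
        fun h => apply_notMem_prefSet σ hk' (mem_of_mem_inter_left h)
      have hsub := hμ (prefSet σ k) (insert (σ ⟨k, hk'⟩) (prefSet σ k ∩ B))
      rw [union_insert, union_eq_left.mpr inter_subset_left, ← prefSet_succ σ hk',
        inter_insert_of_notMem (apply_notMem_prefSet σ hk'), ← inter_assoc, inter_self] at hsub
      rw [prefSet_succ σ hk', insert_inter_of_mem hB, sum_insert hnotMem, marginalVector_apply]
      linarith [ih hk'.le]
    · rw [prefSet_succ σ hk', insert_inter_of_notMem hB]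
      exact ih hk'.le

lemma sum_marginalVector_le (hμ : IsSubmodular μ) (B : Finset Ω) :
    ∑ ω ∈ B, marginalVector μ σ ω ≤ μ B - μ ∅ := by
  simpa using sum_prefSet_inter_marginalVector_le μ σ hμ B le_rfl

end MarginalVector

theorem choquet_dual_eq_max_core_general {Ω : Type*} [Fintype Ω] [DecidableEq Ω]
    (m : Finset Ω → ℝ) (hm : IsCapacity m) (hsm : IsSupermodular m) (f : Ω → ℝ) :
    (∃ P : Ω → ℝ, memCore m P ∧ ∑ ω, P ω * f ω = choquet (dualCap m) f) ∧
    (∀ P : Ω → ℝ, memCore m P → ∑ ω, P ω * f ω ≤ choquet (dualCap m) f) := by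
  obtain ⟨hempty, huniv, hmono⟩ := hm.dualCap
  set σ := sortedEquiv f
  set P := marginalVector (dualCap m) σ
  have hPsum : ∑ ω, P ω = 1 := by rw [sum_marginalVector, huniv, hempty, sub_zero]
  have hPmax : ∑ ω, P ω * f ω = choquet (dualCap m) f := sum_marginalVector_mul _ σ f
  have hPcore : memCore m P := memCore_iff_sum_le_dualCap.mpr
    ⟨⟨marginalVector_nonneg _ σ hmono, hPsum⟩,
      fun A => by simpa [hempty] using sum_marginalVector_le _ σ hsm.isSubmodular_dualCap A⟩
  refine ⟨⟨P, hPcore, hPmax⟩, fun Q hQ => hPmax ▸ ?_⟩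
  obtain ⟨⟨-, hQsum⟩, hQle⟩ := memCore_iff_sum_le_dualCap.mp hQ
  refine sum_mul_le_sum_mul_of_sum_prefSet_le σ (antitone_comp_sortedEquiv f) (fun k hk => ?_)
    (by rw [hQsum, hPsum])
  rw [sum_prefSet_marginalVector _ σ hk, hempty, sub_zero]
  exact hQle _

/-- for supermodular capacities, the dual Choquet integral is the
maximum of expectations over the core, and the maximum is attained. -/
theorem choquet_dual_eq_max_core {Ω : Type*} [Fintype Ω] [DecidableEq Ω] [Nonempty Ω]
    (m : Finset Ω → ℝ) (hm : IsCapacity m) (hsm : IsSupermodular m) (f : Ω → ℝ) :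
    (∃ P : Ω → ℝ, memCore m P ∧ ∑ ω, P ω * f ω = choquet (dualCap m) f) ∧
    (∀ P : Ω → ℝ, memCore m P → ∑ ω, P ω * f ω ≤ choquet (dualCap m) f) :=
  choquet_dual_eq_max_core_general m hm hsm f
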